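/- Let A be a finite left brace of order p²q, where p and q are primes with q > p+1, and let A_q be the q-primary component of the additive group A⁺. Then A_q is contained in Soc(A) = {a : ∀b, a·b = 0}, and A_q is the unique Sylow q-subgroup of the adjoint group A∘ and is normal in A∘. -/

import Mathlib

/-- A left brace multiplication on an additive abelian group. -/
structure LeftBraceMul (A : Type*) [AddCommGroup A] where
  mul : A → A → A
  add_distrib : ∀ a b c : A, mul a (b + c) = mul a b + mul a c
  comp : ∀ a b c : A, mul (mul a b + a + b) c = mul a (mul b c) + mul a c + mul b c
  bij : ∀ a : A, Function.Bijective (fun x => mul a x + x)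

/-!
Put `λ_a x = a·x + x`. Each `λ_a` is an additive endomorphism and `a ↦ λ_a` is a homomorphism
on the adjoint group `A∘`. Since `λ_a` preserves `A_q`, a subgroup of `A⁺` of order `q`, the set
`A_q` is also a subgroup of `A∘`, so `λ_a ^ q = 1` for `a ∈ A_q`. The fixed points of such a map
on a `λ_a`-stable subgroup `T` form a subgroup whose order divides `|T|` and is congruent to `|T|`
modulo `q`. For `T = A_q` (order `q`) and `T = qA` (order `p²`) this forces `T` to be fixed
pointwise, because `q > p + 1` divides neither `p² - 1` nor `p² - p`. These two subgroups have
coprime orders with product `|A|`, so `λ_a = 1`, i.e. `a ∈ Soc(A)`.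

For `c = λ_a b` in the socle, `a ∘ b = c ∘ a`, which makes `A_q` normal in `A∘`. A subgroup of
order `q` then maps trivially to `A∘ / A_q`, of order `p²`, so it lies in `A_q`.
-/

section

variable {A : Type*} [AddCommGroup A]

def primarySubgroup (A : Type*) [AddCommGroup A] (q : ℕ) : AddSubgroup A where
  carrier := {a | ∃ n : ℕ, q ^ n • a = 0}
  add_mem' := by
    rintro a b ⟨m, hm⟩ ⟨n, hn⟩
    have ha : q ^ (m + n) • a = 0 := by rw [pow_add, mul_comm, mul_smul, hm, smul_zero]
    have hb : q ^ (m + n) • b = 0 := by rw [pow_add, mul_smul, hn, smul_zero]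
    exact ⟨m + n, by rw [smul_add, ha, hb, add_zero]⟩
  zero_mem' := ⟨0, smul_zero _⟩
  neg_mem' := by
    rintro a ⟨n, hn⟩
    exact ⟨n, by rw [smul_neg, hn, neg_zero]⟩

theorem map_mem_primarySubgroup {B : Type*} [AddCommGroup B] {q : ℕ} (f : A →+ B) {a : A}
    (ha : a ∈ primarySubgroup A q) : f a ∈ primarySubgroup B q := by
  obtain ⟨n, hn⟩ := ha
  exact ⟨n, by rw [← map_nsmul, hn, map_zero]⟩

theorem card_primarySubgroup [Finite A] {q m : ℕ} [hq : Fact q.Prime]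
    (hA : Nat.card A = m * q) (hqm : q.Coprime m) : Nat.card (primarySubgroup A q) = q := by
  obtain ⟨x, hx⟩ := exists_prime_addOrderOf_dvd_card' q (hA ▸ dvd_mul_left q m)
  have hx_mem : x ∈ primarySubgroup A q := ⟨1, by rw [pow_one, ← hx, addOrderOf_nsmul_eq_zero]⟩
  have hq_dvd : q ∣ Nat.card (primarySubgroup A q) :=
    hx ▸ AddSubgroup.addOrderOf_dvd_natCard (primarySubgroup A q) hx_mem
  have hcop : (Nat.card (primarySubgroup A q)).Coprime m := by
    refine Nat.coprime_of_dvd fun r hr hrA hrm => ?_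
    have := Fact.mk hr
    obtain ⟨y, hy⟩ := exists_prime_addOrderOf_dvd_card' r hrA
    obtain ⟨n, hn⟩ := y.2
    have : r ∣ q ^ n := hy ▸ AddSubgroup.addOrderOf_coe y ▸ addOrderOf_dvd_of_nsmul_eq_zero hn
    rw [(Nat.prime_dvd_prime_iff_eq hr hq.out).mp (hr.dvd_of_dvd_pow this)] at hrm
    exact (Nat.Prime.coprime_iff_not_dvd hq.out).mp hqm hrm
  have hdvd : Nat.card (primarySubgroup A q) ∣ m * q :=
    hA ▸ AddSubgroup.card_addSubgroup_dvd_card _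
  exact Nat.dvd_antisymm (hcop.dvd_of_dvd_mul_left hdvd) hq_dvd

theorem ker_nsmul_eq_primarySubgroup {q : ℕ} (hq : Nat.card (primarySubgroup A q) = q) :
    (nsmulAddMonoidHom q : A →+ A).ker = primarySubgroup A q := by
  ext a
  refine ⟨fun ha => ⟨1, by rwa [pow_one]⟩, fun ha => ?_⟩
  have := card_nsmul_eq_zero' (G := primarySubgroup A q) (x := ⟨a, ha⟩)
  rw [hq] at this
  exact congrArg Subtype.val this

theorem card_range_nsmul [Finite A] {q m : ℕ} [Fact q.Prime]
    (hA : Nat.card A = m * q) (hqm : q.Coprime m) :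
    Nat.card (nsmulAddMonoidHom q : A →+ A).range = m := by
  have hq := card_primarySubgroup hA hqm
  have h := (nsmulAddMonoidHom q : A →+ A).ker.card_mul_index
  rw [AddSubgroup.index_ker, ker_nsmul_eq_primarySubgroup hq, hq, hA, mul_comm] at h
  exact Nat.eq_of_mul_eq_mul_right (Fact.out : q.Prime).pos h

theorem AddMonoid.End.apply_eq_self_of_pow_eq_one [Finite A] {q : ℕ} [Fact q.Prime]
    {σ : AddMonoid.End A} (hσ : σ ^ q = 1) {T : AddSubgroup A} (hT : Set.MapsTo σ T T)
    (hcard : ∀ d, d ∣ Nat.card T → d ≡ Nat.card T [MOD q] → d = Nat.card T) {x : A} (hx : x ∈ T) :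
    σ x = x := by
  classical
  have := Fintype.ofFinite T
  let f : Function.End T := hT.restrict
  have hf : f ^ q ^ 1 = 1 := funext fun y => Subtype.ext <| by
    rw [pow_one]
    exact (hT.coe_iterate_restrict y q).trans (by rw [← AddMonoid.End.coe_pow, hσ]; rfl)
  let F : AddSubgroup T := ((σ : A →+ A).eqLocus (AddMonoidHom.id A)).addSubgroupOf T
  have hFf : Nat.card F = Nat.card f.fixedPoints :=
    Nat.card_congr (Equiv.subtypeEquivRight fun y =>
      show σ y = y ↔ f y = y from ⟨fun h => Subtype.ext h, congrArg Subtype.val⟩)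
  have hmod : Nat.card F ≡ Nat.card T [MOD q] := by
    have := Equiv.Perm.card_fixedPoints_modEq hf
    rw [← Nat.card_eq_fintype_card, ← Nat.card_eq_fintype_card, ← hFf] at this
    exact this.symm
  have hF : F = ⊤ := AddSubgroup.eq_top_of_card_eq F
    (hcard _ (AddSubgroup.card_addSubgroup_dvd_card F) hmod)
  exact (show (⟨x, hx⟩ : T) ∈ F from hF ▸ trivial)

theorem AddMonoid.End.eq_one_of_forall_mem_eq_self [Finite A] {σ : AddMonoid.End A}
    {S T : AddSubgroup A} (hST : (Nat.card S).Coprime (Nat.card T))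
    (hA : Nat.card A = Nat.card S * Nat.card T) (hS : ∀ x ∈ S, σ x = x) (hT : ∀ x ∈ T, σ x = x) :
    σ = 1 := by
  let F := (σ : A →+ A).eqLocus (AddMonoidHom.id A)
  have hF : F = ⊤ := AddSubgroup.eq_top_of_le_card F <| hA ▸ Nat.le_of_dvd Nat.card_pos
    (hST.mul_dvd_of_dvd_of_dvd (AddSubgroup.card_dvd_of_le hS) (AddSubgroup.card_dvd_of_le hT))
  ext x
  exact (show x ∈ F from hF ▸ AddSubgroup.mem_top x)

end

theorem eq_of_dvd_prime_of_modEq {q d : ℕ} (hq : q.Prime) (hd : d ∣ q) (hmod : d ≡ q [MOD q]) :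
    d = q := by
  rcases (Nat.dvd_prime hq).mp hd with rfl | rfl
  · exact absurd (Nat.modEq_zero_iff_dvd.mp (hmod.trans (Nat.modEq_zero_iff_dvd.mpr dvd_rfl)))
      hq.not_dvd_one
  · rfl

theorem eq_sq_of_dvd_sq_of_modEq {p q d : ℕ} (hp : p.Prime) (hq : q.Prime) (hqp : p + 1 < q)
    (hd : d ∣ p ^ 2) (hmod : d ≡ p ^ 2 [MOD q]) : d = p ^ 2 := by
  obtain ⟨i, hi, rfl⟩ := (Nat.dvd_prime_pow hp).mp hd
  have hdvd : (q : ℤ) ∣ (p : ℤ) ^ 2 - (p : ℤ) ^ i := by exact_mod_cast (Nat.modEq_iff_dvd.mp hmod)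
  have hq' := Nat.prime_iff_prime_int.mp hq
  have hsmall : ∀ x y : ℤ, 0 < x → x < q → 0 < y → y < q → ¬ (q : ℤ) ∣ x * y :=
    fun x y hx hxq hy hyq h => (hq'.dvd_or_dvd h).elim
      (fun h => (Int.le_of_dvd hx h).not_gt hxq) (fun h => (Int.le_of_dvd hy h).not_gt hyq)
  have hp2 := hp.two_le
  interval_cases i
  · refine absurd ?_ (hsmall (p - 1) (p + 1) (by omega) (by omega) (by omega) (by omega))
    convert hdvd using 1
    ring
  · refine absurd ?_ (hsmall p (p - 1) (by omega) (by omega) (by omega) (by omega))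
    convert hdvd using 1
    ring
  · rfl

theorem Nat.Prime.coprime_sq_of_lt {p q : ℕ} (hp : p.Prime) (hq : q.Prime) (hpq : p < q) :
    q.Coprime (p ^ 2) :=
  ((Nat.coprime_primes hq hp).mpr hpq.ne').pow_right 2

theorem Subgroup.le_of_coprime_index {G : Type*} [Group G] {N H : Subgroup G} [N.Normal]
    (h : (Nat.card H).Coprime N.index) : H ≤ N := by
  intro x hx
  rw [← QuotientGroup.eq_one_iff, ← orderOf_eq_one_iff]
  exact Nat.eq_one_of_dvd_coprimes h
    ((orderOf_map_dvd (QuotientGroup.mk' N) x).trans (Subgroup.orderOf_dvd_natCard H hx))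
    (N.index_eq_card ▸ _root_.orderOf_dvd_natCard _)

theorem Submonoid.le_of_coprime_index {G : Type*} [Group G] [Finite G] (M : Submonoid G)
    {N : Subgroup G} [N.Normal] (h : (Nat.card M).Coprime N.index) : M ≤ N.toSubmonoid := by
  have hK : (Subgroup.closure (M : Set G)).toSubmonoid = M := by
    rw [Subgroup.closure_toSubmonoid_of_finite, Submonoid.closure_eq]
  rw [← hK] at h ⊢
  exact Subgroup.le_of_coprime_index h

namespace LeftBraceMul

variable {A : Type*} [AddCommGroup A]

variable (Br : LeftBraceMul A)

theorem mul_zero (a : A) : Br.mul a 0 = 0 := by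
  simpa using Br.add_distrib a 0 0

def lam (a : A) : AddMonoid.End A where
  toFun x := Br.mul a x + x
  map_zero' := by rw [mul_zero, add_zero]
  map_add' x y := by rw [Br.add_distrib]; abel

theorem lam_apply (a x : A) : Br.lam a x = Br.mul a x + x := rfl

theorem zero_mul (a : A) : Br.mul 0 a = 0 := by
  have h := Br.comp 0 0 a
  rw [mul_zero, add_zero, add_zero] at h
  refine (Br.bij 0).injective ?_
  calc Br.mul 0 (Br.mul 0 a) + Br.mul 0 a
      = Br.mul 0 (Br.mul 0 a) + Br.mul 0 a + Br.mul 0 a - Br.mul 0 a := by abel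
    _ = Br.mul 0 0 + 0 := by rw [← h, sub_self, mul_zero, add_zero]

theorem lam_zero : Br.lam 0 = 1 := by
  ext a
  rw [lam_apply, zero_mul, zero_add]
  rfl

theorem lam_add_add_mul (a b : A) : Br.lam (a + b + Br.mul a b) = Br.lam a * Br.lam b := by
  ext x
  simp only [AddMonoid.End.coe_mul, Function.comp_apply, lam_apply, Br.add_distrib]
  rw [show a + b + Br.mul a b = Br.mul a b + a + b by abel, Br.comp]
  abel

def Adjoint (_ : LeftBraceMul A) : Type _ := A

def toAdjoint : A ≃ Br.Adjoint := Equiv.refl A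

instance : Mul Br.Adjoint := ⟨fun a b : A => a + b + Br.mul a b⟩

instance : One Br.Adjoint := ⟨(0 : A)⟩

noncomputable def adjointInv (a : A) : A := (Equiv.ofBijective (Br.lam a) (Br.bij a)).symm (-a)

theorem add_adjointInv_add_mul (a : A) : a + Br.adjointInv a + Br.mul a (Br.adjointInv a) = 0 := by
  have h : Br.lam a (Br.adjointInv a) = -a := Equiv.ofBijective_apply_symm_apply _ _ _
  rw [lam_apply] at h
  rw [add_assoc, add_comm (Br.adjointInv a), h, add_neg_cancel]

noncomputable instance : Inv Br.Adjoint := ⟨Br.adjointInv⟩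

theorem toAdjoint_mul (a b : A) :
    Br.toAdjoint a * Br.toAdjoint b = Br.toAdjoint (a + b + Br.mul a b) := rfl

noncomputable instance : Group Br.Adjoint := Group.ofRightAxioms
  (fun a b c : A => by
    change a + b + Br.mul a b + c + Br.mul (a + b + Br.mul a b) c =
      a + (b + c + Br.mul b c) + Br.mul a (b + c + Br.mul b c)
    rw [show a + b + Br.mul a b = Br.mul a b + a + b by abel, Br.comp, Br.add_distrib,
      Br.add_distrib]
    abel)
  (fun a : A => by change a + 0 + Br.mul a 0 = a; rw [mul_zero, add_zero, add_zero])
  Br.add_adjointInv_add_mul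

instance [Finite A] : Finite Br.Adjoint := inferInstanceAs (Finite A)

def lamHom : Br.Adjoint →* AddMonoid.End A where
  toFun a := Br.lam (Br.toAdjoint.symm a)
  map_one' := Br.lam_zero
  map_mul' a b := Br.lam_add_add_mul a b

theorem lamHom_toAdjoint (a : A) : Br.lamHom (Br.toAdjoint a) = Br.lam a := rfl

theorem toAdjoint_mul_eq_add_lam (a b : A) :
    Br.toAdjoint a * Br.toAdjoint b = Br.toAdjoint (a + Br.lam a b) := by
  rw [toAdjoint_mul, lam_apply]
  congr 1
  abel

theorem toAdjoint_mul_eq_lam_mul {a b : A} (h : Br.mul (Br.lam a b) a = 0) :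
    Br.toAdjoint a * Br.toAdjoint b = Br.toAdjoint (Br.lam a b) * Br.toAdjoint a := by
  rw [toAdjoint_mul, toAdjoint_mul, h, lam_apply]
  congr 1
  abel

theorem mapsTo_lam_primarySubgroup (q : ℕ) (a : A) :
    Set.MapsTo (Br.lam a) (primarySubgroup A q) (primarySubgroup A q) :=
  fun _ hx => map_mem_primarySubgroup (Br.lam a) hx

variable {Br}

def adjointSubgroupOf (I : AddSubgroup A) (hI : ∀ a, Set.MapsTo (Br.lam a) I I) :
    Subgroup Br.Adjoint where
  carrier := Br.toAdjoint.symm ⁻¹' I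
  mul_mem' {a b} ha hb := by
    obtain ⟨a, rfl⟩ := Br.toAdjoint.surjective a
    obtain ⟨b, rfl⟩ := Br.toAdjoint.surjective b
    rw [toAdjoint_mul_eq_add_lam]
    exact I.add_mem ha (hI a hb)
  one_mem' := I.zero_mem
  inv_mem' {a} ha := by
    obtain ⟨a, rfl⟩ := Br.toAdjoint.surjective a
    have h := inv_mul_cancel (Br.toAdjoint a)
    rw [← Br.toAdjoint.apply_symm_apply (Br.toAdjoint a)⁻¹, toAdjoint_mul_eq_add_lam] at h
    rw [Set.mem_preimage, eq_neg_of_add_eq_zero_left (Br.toAdjoint.injective h)]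
    exact I.neg_mem (hI _ ha)

theorem card_adjointSubgroupOf (I : AddSubgroup A) (hI : ∀ a, Set.MapsTo (Br.lam a) I I) :
    Nat.card (adjointSubgroupOf I hI) = Nat.card I :=
  Nat.card_congr (Br.toAdjoint.subtypeEquiv fun _ => Iff.rfl).symm

theorem adjointSubgroupOf_normal {I : AddSubgroup A} (hI : ∀ a, Set.MapsTo (Br.lam a) I I)
    (hsoc : ∀ c ∈ I, ∀ x, Br.mul c x = 0) : (adjointSubgroupOf I hI).Normal where
  conj_mem n hn g := by
    obtain ⟨g, rfl⟩ := Br.toAdjoint.surjective g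
    obtain ⟨n, rfl⟩ := Br.toAdjoint.surjective n
    have hn' : n ∈ I := hn
    rw [toAdjoint_mul_eq_lam_mul Br (hsoc _ (hI g hn') g), mul_inv_cancel_right]
    exact hI g hn'

theorem lam_pow_card_eq_one {N : Subgroup Br.Adjoint} {a : A} (ha : Br.toAdjoint a ∈ N) :
    Br.lam a ^ Nat.card N = 1 := by
  rw [← lamHom_toAdjoint, ← map_pow,
    orderOf_dvd_iff_pow_eq_one.mp (N.orderOf_dvd_natCard ha), map_one]

theorem subset_of_coprime_index [Finite A] {H : Set A} (h0 : 0 ∈ H)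
    (hmul : ∀ a ∈ H, ∀ b ∈ H, a + b + Br.mul a b ∈ H) {N : Subgroup Br.Adjoint} [N.Normal]
    (hcop : (Nat.card H).Coprime N.index) : H ⊆ Br.toAdjoint ⁻¹' N := by
  let M : Submonoid Br.Adjoint :=
    { carrier := Br.toAdjoint.symm ⁻¹' H
      mul_mem' := fun {a b} ha hb => hmul a ha b hb
      one_mem' := h0 }
  have hM : Nat.card M = Nat.card H :=
    Nat.card_congr (Br.toAdjoint.subtypeEquiv fun _ => Iff.rfl).symm
  exact fun a ha => Submonoid.le_of_coprime_index M (hM ▸ hcop) (show Br.toAdjoint a ∈ M from ha)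

variable (Br) [Finite A] {p q : ℕ} (hp : p.Prime) (hq : q.Prime) (hqp : p + 1 < q)
  (hA : Nat.card A = p ^ 2 * q)
include hp hq hqp hA

theorem lam_eq_one_of_mem_primarySubgroup {a : A} (ha : a ∈ primarySubgroup A q) :
    Br.lam a = 1 := by
  have := Fact.mk hq
  have hcop := hp.coprime_sq_of_lt hq (by omega)
  have hQ : Nat.card (primarySubgroup A q) = q := card_primarySubgroup hA hcop
  have hR : Nat.card (nsmulAddMonoidHom q : A →+ A).range = p ^ 2 := card_range_nsmul hA hcop
  have hσ : Br.lam a ^ q = 1 := by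
    simpa only [card_adjointSubgroupOf, hQ] using
      lam_pow_card_eq_one (N := adjointSubgroupOf _ (Br.mapsTo_lam_primarySubgroup q)) ha
  refine AddMonoid.End.eq_one_of_forall_mem_eq_self (S := (nsmulAddMonoidHom q : A →+ A).range)
    (T := primarySubgroup A q) (by rw [hR, hQ]; exact hcop.symm) (by rw [hR, hQ, hA])
    (fun x hx => ?_) (fun x hx => ?_)
  · refine AddMonoid.End.apply_eq_self_of_pow_eq_one hσ ?_ (fun d hd hmod => ?_) hx
    · rintro _ ⟨y, rfl⟩
      exact ⟨Br.lam a y, (map_nsmul (Br.lam a) q y).symm⟩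
    · rw [hR] at hd hmod ⊢
      exact eq_sq_of_dvd_sq_of_modEq hp hq hqp hd hmod
  · refine AddMonoid.End.apply_eq_self_of_pow_eq_one hσ (Br.mapsTo_lam_primarySubgroup q a)
      (fun d hd hmod => ?_) hx
    rw [hQ] at hd hmod ⊢
    exact eq_of_dvd_prime_of_modEq hq hd hmod

theorem mul_eq_zero_of_mem_primarySubgroup {a : A} (ha : a ∈ primarySubgroup A q) (b : A) :
    Br.mul a b = 0 := by
  have h : Br.lam a b = b := by rw [Br.lam_eq_one_of_mem_primarySubgroup hp hq hqp hA ha]; rfl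
  rwa [lam_apply, add_eq_right] at h

theorem eq_primarySubgroup_of_card_eq {H : Set A} (h0 : 0 ∈ H)
    (hmul : ∀ a ∈ H, ∀ b ∈ H, a + b + Br.mul a b ∈ H) (hH : Nat.card H = q) :
    H = primarySubgroup A q := by
  have := Fact.mk hq
  have hcop := hp.coprime_sq_of_lt hq (by omega)
  have hQ : Nat.card (primarySubgroup A q) = q := card_primarySubgroup hA hcop
  let N := adjointSubgroupOf _ (Br.mapsTo_lam_primarySubgroup q)
  have := adjointSubgroupOf_normal (Br.mapsTo_lam_primarySubgroup q)
    fun _ ha => Br.mul_eq_zero_of_mem_primarySubgroup hp hq hqp hA ha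
  have hN : N.index = p ^ 2 := by
    have h := N.card_mul_index
    rw [card_adjointSubgroupOf, hQ, ← Nat.card_congr Br.toAdjoint, hA, mul_comm] at h
    exact Nat.eq_of_mul_eq_mul_right hq.pos h
  have hsub : H ⊆ primarySubgroup A q := subset_of_coprime_index h0 hmul (N := N) (hH ▸ hN ▸ hcop)
  exact Set.eq_of_subset_of_ncard_le hsub (hQ.trans hH.symm).le (Set.toFinite _)

end LeftBraceMul

open LeftBraceMul in
/-- In a left brace of order p²q with q > p+1, the q-primary component A_q of
the additive group lies in the socle and is the unique Sylow q-subgroup of the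
adjoint group, which is moreover normal. -/
theorem stmt_17 {A : Type*} [AddCommGroup A] [Fintype A] (Br : LeftBraceMul A)
    (p q : ℕ) (hp : p.Prime) (hq : q.Prime) (hqp : q > p + 1)
    (hcard : Fintype.card A = p ^ 2 * q) :
    (∀ a : A, (∃ n : ℕ, q ^ n • a = 0) → ∀ b : A, Br.mul a b = 0) ∧
    Nat.card {a : A | ∃ n : ℕ, q ^ n • a = 0} = q ∧
    (∀ H : Set A, (0 : A) ∈ H →
      (∀ a ∈ H, ∀ b ∈ H, a + b + Br.mul a b ∈ H) → Nat.card H = q →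
      H = {a : A | ∃ n : ℕ, q ^ n • a = 0}) ∧
    (∀ a : A, ∀ b ∈ {a : A | ∃ n : ℕ, q ^ n • a = 0},
      ∃ c ∈ {a : A | ∃ n : ℕ, q ^ n • a = 0},
        a + b + Br.mul a b = c + a + Br.mul c a) := by
  have := Fact.mk hq
  have hA : Nat.card A = p ^ 2 * q := by rw [Nat.card_eq_fintype_card, hcard]
  have hsoc (a : A) (ha : a ∈ primarySubgroup A q) :=
    Br.mul_eq_zero_of_mem_primarySubgroup hp hq hqp hA ha
  have hcop := hp.coprime_sq_of_lt hq (by omega)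
  refine ⟨hsoc, card_primarySubgroup hA hcop,
    fun H h0 hmul hH => Br.eq_primarySubgroup_of_card_eq hp hq hqp hA h0 hmul hH,
    fun a b hb => ?_⟩
  have hc := Br.mapsTo_lam_primarySubgroup q a hb
  exact ⟨Br.lam a b, hc, Br.toAdjoint_mul_eq_lam_mul (hsoc _ hc a)⟩
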